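/- Let C be a chain system with the restriction property: whenever x ≤ y and x' ≤ y' in P(C) and the label-word sets C|_{[x,y]} and C|_{[x',y']} are not disjoint, they are equal. Then P(C) is group-like: for any x ≤ y ≤ z and x' ≤ y' ≤ z' in P(C), if two of the three equalities C|_{[x,y]} = C|_{[x',y']}, C|_{[x,z]} = C|_{[x',z']}, C|_{[y,z]} = C|_{[y',z']} hold, then so does the third. -/
import Mathlib


/-! Basic notions for chain systems on words over an alphabet. -/

namespace ChainSys

variable {A : Type*}

/-- `p` is a prefix (initial segment) of some word of `C`. -/
def PreWord (C : Set (List A)) (p : List A) : Prop := ∃ x, p ++ x ∈ C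

/-- `x` is a postfix (final segment) of some word of `C`. -/
def PostWord (C : Set (List A)) (x : List A) : Prop := ∃ p, p ++ x ∈ C

/-- Two prefixes of `C` are equivalent when some common postfix completes both into `C`. -/
def PreEquiv (C : Set (List A)) (p₁ p₂ : List A) : Prop :=
  ∃ x, p₁ ++ x ∈ C ∧ p₂ ++ x ∈ C

/-- Two postfixes of `C` are equivalent when some common prefix completes both into `C`. -/
def PostEquiv (C : Set (List A)) (x₁ x₂ : List A) : Prop :=
  ∃ p, p ++ x₁ ∈ C ∧ p ++ x₂ ∈ C

/-- A chain system: (i) bounded word lengths; (ii) whether `p ++ x ∈ C` depends only on the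
equivalence classes of the prefix `p` and the postfix `x`; (iii) unique single-letter
substitution. -/
def IsChainSystem (C : Set (List A)) : Prop :=
  (∃ N, ∀ w ∈ C, w.length ≤ N) ∧
  (∀ p₁ p₂ x₁ x₂, PreEquiv C p₁ p₂ → PostEquiv C x₁ x₂ → p₁ ++ x₁ ∈ C → p₂ ++ x₂ ∈ C) ∧
  (∀ (p : List A) (a : A) (w x : List A), p ++ [a] ++ x ∈ C → p ++ w ++ x ∈ C → w = [a])

/-- The prefix order on (equivalence classes of) prefixes of `C`, at the level of
representatives: `P ≤ Q` iff some representative of `P` is an initial segment of some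
representative of `Q`. -/
def LePre (C : Set (List A)) (p q : List A) : Prop :=
  ∃ p' q', PreEquiv C p p' ∧ PreEquiv C q q' ∧ p' <+: q'

/-- Cover relations of the prefix order, at the level of representatives. -/
def CoverPre (C : Set (List A)) (p q : List A) : Prop :=
  LePre C p q ∧ ¬ PreEquiv C p q ∧
    ∀ r, LePre C p r → LePre C r q → PreEquiv C r p ∨ PreEquiv C r q

end ChainSys

open ChainSys


/-- The restriction `C|_{[P,Q]}` of a chain system to the interval from the class of `p` to
the class of `q`: the words read off, from `p` up to `q`, along saturated chains of the
prefix-order poset from the class of `p` to the class of `q`. -/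
def RestrictWords {A : Type*} (C : Set (List A)) (p q : List A) : Set (List A) :=
  {w | PreEquiv C (p ++ w) q ∧
    ∀ i < w.length, CoverPre C (p ++ w.take i) (p ++ w.take (i + 1))}


namespace ChainSys

variable {A : Type*} {C : Set (List A)}

lemma preEquiv_symm {p q : List A} (h : PreEquiv C p q) : PreEquiv C q p :=
  let ⟨x, h1, h2⟩ := h; ⟨x, h2, h1⟩

lemma mem_of_preEquiv (h : IsChainSystem C) {m m' u : List A}
    (he : PreEquiv C m m') (hu : m ++ u ∈ C) : m' ++ u ∈ C :=
  h.2.1 m m' u u he ⟨m, hu, hu⟩ hu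

lemma preEquiv_trans (h : IsChainSystem C) {p q r : List A}
    (h1 : PreEquiv C p q) (h2 : PreEquiv C q r) : PreEquiv C p r :=
  let ⟨x, ha, hb⟩ := h1; ⟨x, ha, mem_of_preEquiv h h2 hb⟩

lemma cover_single (h : IsChainSystem C) {p : List A} {a : A} {s : List A}
    (hs : p ++ [a] ++ s ∈ C) : CoverPre C p (p ++ [a]) := by
  have hpw : p ++ ([a] ++ s) ∈ C := by simpa [List.append_assoc] using hs
  refine ⟨⟨p, p ++ [a], ⟨[a] ++ s, hpw, hpw⟩, ⟨s, hs, hs⟩, ⟨[a], rfl⟩⟩, ?_, ?_⟩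
  · rintro ⟨x, hx1, hx2⟩
    have : ([] : List A) = [a] :=
      h.2.2 p a [] x (by simpa using hx2) (by simpa using hx1)
    simp at this
  · rintro r ⟨p₁, r₁, hpp₁, hrr₁, ⟨s₁, rfl⟩⟩ ⟨r₂, t₂, hrr₂, hqt₂, ⟨s₂, rfl⟩⟩
    obtain ⟨x, hx1, hx2⟩ := hqt₂
    have hr₂ : PreEquiv C r₂ (p₁ ++ s₁) :=
      preEquiv_trans h (preEquiv_symm hrr₂) hrr₁
    have h1 : (p₁ ++ s₁) ++ (s₂ ++ x) ∈ C :=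
      mem_of_preEquiv h hr₂ (by simpa [List.append_assoc] using hx2)
    have h2' : p₁ ++ ([a] ++ x) ∈ C :=
      mem_of_preEquiv h hpp₁ (by simpa [List.append_assoc] using hx1)
    have hss : s₁ ++ s₂ = [a] :=
      h.2.2 p₁ a (s₁ ++ s₂) x (by simpa [List.append_assoc] using h2')
        (by simpa [List.append_assoc] using h1)
    rcases s₁ with _ | ⟨b, s₁'⟩
    · left
      exact preEquiv_trans h hrr₁ (by simpa using preEquiv_symm hpp₁)
    · right
      have hb : b = a ∧ s₁' ++ s₂ = [] := by simpa using hss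
      have hs₂ : s₂ = [] := by
        have := hb.2; exact (List.append_eq_nil_iff.mp this).2
      subst hs₂
      refine preEquiv_trans h hrr₂ ?_
      simpa using preEquiv_symm ⟨x, hx1, hx2⟩

lemma mem_restrict_iff (h : IsChainSystem C) {p q w : List A} :
    w ∈ RestrictWords C p q ↔ PreEquiv C (p ++ w) q := by
  constructor
  · exact fun hw => hw.1
  · intro hw
    refine ⟨hw, ?_⟩
    intro i hi
    obtain ⟨t, ht1, ht2⟩ := hw
    have hsucc : w.take (i + 1) = w.take i ++ [w[i]] := by
      rw [List.take_succ, List.getElem?_eq_getElem hi]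
      simp
    have hmem : (p ++ w.take i) ++ [w[i]] ++ (w.drop (i + 1) ++ t) ∈ C := by
      have heq : (p ++ w.take i) ++ [w[i]] ++ (w.drop (i + 1) ++ t) = (p ++ w) ++ t := by
        conv_rhs => rw [← List.take_append_drop (i + 1) w]
        rw [hsucc]
        simp only [List.append_assoc]
      rw [heq]; exact ht1
    have := cover_single h hmem
    rw [hsucc, ← List.append_assoc]
    exact this

lemma exists_mem_of_lePre (h : IsChainSystem C) {p q : List A}
    (hle : LePre C p q) : ∃ w, PreEquiv C (p ++ w) q := by
  obtain ⟨p₁, q₁, hp, hq, w, rfl⟩ := hle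
  obtain ⟨t, ht1, ht2⟩ := hq
  have : p ++ (w ++ t) ∈ C :=
    mem_of_preEquiv h (preEquiv_symm hp) (by simpa [List.append_assoc] using ht2)
  exact ⟨w, ⟨t, by simpa [List.append_assoc] using this, ht1⟩⟩

lemma lePre_of_mem {p q w : List A} (hw : PreEquiv C (p ++ w) q) : LePre C p q := by
  obtain ⟨t, ht1, ht2⟩ := hw
  exact ⟨p, p ++ w, ⟨w ++ t, by simpa [List.append_assoc] using ht1,
    by simpa [List.append_assoc] using ht1⟩, preEquiv_symm ⟨t, ht1, ht2⟩, ⟨w, rfl⟩⟩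

lemma compose (h : IsChainSystem C) {x y z w v : List A}
    (hw : PreEquiv C (x ++ w) y) (hv : PreEquiv C (y ++ v) z) :
    PreEquiv C (x ++ (w ++ v)) z := by
  obtain ⟨t, ht1, ht2⟩ := hv
  have : (x ++ w) ++ (v ++ t) ∈ C :=
    mem_of_preEquiv h (preEquiv_symm hw) (by simpa [List.append_assoc] using ht1)
  exact ⟨t, by simpa [List.append_assoc] using this, ht2⟩

end ChainSys

/-- If a chain system `C` has the restriction property (two interval
restrictions that are not disjoint are equal), then its labeled poset is group-like: for
`x ≤ y ≤ z` and `x' ≤ y' ≤ z'`, if two of the three corresponding pairs of interval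
restrictions agree, so does the third. -/
theorem statement_8 {A : Type*} (C : Set (List A)) (h : IsChainSystem C)
    (hres : ∀ p q p' q', LePre C p q → LePre C p' q' →
      (RestrictWords C p q ∩ RestrictWords C p' q').Nonempty →
      RestrictWords C p q = RestrictWords C p' q') :
    ∀ x y z x' y' z' : List A, LePre C x y → LePre C y z → LePre C x' y' → LePre C y' z' →
      ((RestrictWords C x y = RestrictWords C x' y' →
        RestrictWords C y z = RestrictWords C y' z' →
        RestrictWords C x z = RestrictWords C x' z') ∧
       (RestrictWords C x y = RestrictWords C x' y' →
        RestrictWords C x z = RestrictWords C x' z' →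
        RestrictWords C y z = RestrictWords C y' z') ∧
       (RestrictWords C y z = RestrictWords C y' z' →
        RestrictWords C x z = RestrictWords C x' z' →
        RestrictWords C x y = RestrictWords C x' y')) := by
  
  intro x y z x' y' z' hxy hyz hx'y' hy'z'
  have mem : ∀ p q w : List A, w ∈ RestrictWords C p q ↔ PreEquiv C (p ++ w) q :=
    fun p q w => mem_restrict_iff h
  refine ⟨?_, ?_, ?_⟩
  · intro h1 h2
    obtain ⟨w, hw⟩ := exists_mem_of_lePre h hxy
    obtain ⟨v, hv⟩ := exists_mem_of_lePre h hyz
    have hw' : PreEquiv C (x' ++ w) y' := by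
      have := (mem x y w).2 hw
      rw [h1] at this
      exact (mem x' y' w).1 this
    have hv' : PreEquiv C (y' ++ v) z' := by
      have := (mem y z v).2 hv
      rw [h2] at this
      exact (mem y' z' v).1 this
    have hwv : PreEquiv C (x ++ (w ++ v)) z := compose h hw hv
    have hwv' : PreEquiv C (x' ++ (w ++ v)) z' := compose h hw' hv'
    exact hres _ _ _ _ (lePre_of_mem hwv) (lePre_of_mem hwv')
      ⟨w ++ v, (mem _ _ _).2 hwv, (mem _ _ _).2 hwv'⟩
  · intro h1 h2
    obtain ⟨w, hw⟩ := exists_mem_of_lePre h hxy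
    obtain ⟨v, hv⟩ := exists_mem_of_lePre h hyz
    have hw' : PreEquiv C (x' ++ w) y' := by
      have := (mem x y w).2 hw
      rw [h1] at this
      exact (mem x' y' w).1 this
    have hwv : PreEquiv C (x ++ (w ++ v)) z := compose h hw hv
    have hwv' : PreEquiv C (x' ++ (w ++ v)) z' := by
      have := (mem x z (w ++ v)).2 hwv
      rw [h2] at this
      exact (mem x' z' (w ++ v)).1 this
    have hv' : PreEquiv C (y' ++ v) z' := by
      obtain ⟨t, ht1, ht2⟩ := hwv'
      have h1' : (x' ++ w) ++ (v ++ t) ∈ C := by simpa [List.append_assoc] using ht1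
      have h2' : y' ++ (v ++ t) ∈ C := mem_of_preEquiv h hw' h1'
      exact ⟨t, by simpa [List.append_assoc] using h2', ht2⟩
    exact hres _ _ _ _ hyz hy'z' ⟨v, (mem _ _ _).2 hv, (mem _ _ _).2 hv'⟩
  · intro h1 h2
    obtain ⟨w, hw⟩ := exists_mem_of_lePre h hxy
    obtain ⟨v, hv⟩ := exists_mem_of_lePre h hyz
    have hv' : PreEquiv C (y' ++ v) z' := by
      have := (mem y z v).2 hv
      rw [h1] at this
      exact (mem y' z' v).1 this
    have hwv : PreEquiv C (x ++ (w ++ v)) z := compose h hw hv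
    have hwv' : PreEquiv C (x' ++ (w ++ v)) z' := by
      have := (mem x z (w ++ v)).2 hwv
      rw [h2] at this
      exact (mem x' z' (w ++ v)).1 this
    have hw' : PreEquiv C (x' ++ w) y' := by
      obtain ⟨t, ht1, ht2⟩ := hwv'
      have h3 : (y' ++ v) ++ t ∈ C := mem_of_preEquiv h (preEquiv_symm hv') ht2
      exact ⟨v ++ t, by simpa [List.append_assoc] using ht1,
        by simpa [List.append_assoc] using h3⟩
    exact hres _ _ _ _ hxy hx'y' ⟨w, (mem _ _ _).2 hw, (mem _ _ _).2 hw'⟩
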